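/- In the two-row model M1 with T rounds, α ∈ (0,1), row rewards R1 > R2 ≥ 0, unlearned rewards C1 ≤ R1 and C2 ≤ R2, and row 2 already learned, define V(t) as the optimal expected payoff over rounds t,…,T. If playing row 1 is strictly optimal at round t (i.e. α·(R1·(T−t+1)) + (1−α)·(C1 + R2·(T−t)) > R2·(T−t+1)), then playing row 1 is also strictly optimal at round t−1 (for any t ≥ 2): α·(R1·(T−t+2)) + (1−α)·(C1 + V(t)) > R2 + V(t). -/

import Mathlib

/-- Optimal expected payoff with `n` rounds remaining in the two-row model M1
where row 2 is already learned (deterministic reward `R2`), row 1 is unlearned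
(maximum reward `R1`, unlearned reward `C1`, learning probability `α`), and after
the current round the policy plays the better of the learned rows. -/
def Vrem (α R1 R2 C1 : ℝ) : ℕ → ℝ
  | 0 => 0
  | n + 1 => max (α * (R1 * ((n : ℝ) + 1)) + (1 - α) * (C1 + R2 * (n : ℝ)))
      (R2 * ((n : ℝ) + 1))

lemma Vrem_succ_of_le {α R1 R2 C1 : ℝ} {n : ℕ}
    (h : R2 * ((n : ℝ) + 1) ≤ α * (R1 * ((n : ℝ) + 1)) + (1 - α) * (C1 + R2 * n)) :
    Vrem α R1 R2 C1 (n + 1) = α * (R1 * ((n : ℝ) + 1)) + (1 - α) * (C1 + R2 * n) :=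
  max_eq_left h

/-- With `V` the value of learning row 1 over `n + 1` remaining rounds, the gap between
learning one round earlier and first playing row 2 is `(1 - α) (V - R2 (n + 1)) + α (R1 - R2)`. -/
lemma learn_earlier_gain {α R1 R2 C1 : ℝ} (n : ℝ) (hα0 : 0 < α) (hα1 : α < 1) (hR : R2 < R1)
    (hopt : R2 * (n + 1) < α * (R1 * (n + 1)) + (1 - α) * (C1 + R2 * n)) :
    R2 + (α * (R1 * (n + 1)) + (1 - α) * (C1 + R2 * n)) <
      α * (R1 * (n + 2)) + (1 - α) * (C1 + (α * (R1 * (n + 1)) + (1 - α) * (C1 + R2 * n))) := by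
  have hgain : 0 < (1 - α) * (α * (R1 * (n + 1)) + (1 - α) * (C1 + R2 * n) - R2 * (n + 1)) :=
    mul_pos (sub_pos.mpr hα1) (sub_pos.mpr hopt)
  nlinarith [mul_pos hα0 (sub_pos.mpr hR)]

/-- `V(t)` is `Vrem (T - t + 1)`. -/
theorem stmt_8_general (α R1 R2 C1 : ℝ) (T t : ℕ) (htT : t ≤ T)
    (hα0 : 0 < α) (hα1 : α < 1) (hR : R2 < R1)
    (hopt : α * (R1 * ((T : ℝ) - t + 1)) + (1 - α) * (C1 + R2 * ((T : ℝ) - t))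
        > R2 * ((T : ℝ) - t + 1)) :
    α * (R1 * ((T : ℝ) - t + 2)) + (1 - α) * (C1 + Vrem α R1 R2 C1 (T - t + 1))
      > R2 + Vrem α R1 R2 C1 (T - t + 1) := by
  have hcast : ((T - t : ℕ) : ℝ) = (T : ℝ) - t := Nat.cast_sub htT
  have hV := Vrem_succ_of_le (α := α) (R1 := R1) (R2 := R2) (C1 := C1) (n := T - t)
    (by rw [hcast]; exact hopt.le)
  rw [hV, hcast]
  exact learn_earlier_gain _ hα0 hα1 hR hopt

/-- If playing (unlearned) row 1 is strictly optimal at round `t`, it is also strictly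
optimal at round `t - 1`.  Here `V(t)` is `Vrem (T - t + 1)`, the optimal expected
payoff over rounds t,…,T. -/
theorem stmt_8 (α R1 R2 C1 C2 : ℝ) (T t : ℕ) (ht2 : 2 ≤ t) (htT : t ≤ T)
    (hα0 : 0 < α) (hα1 : α < 1) (hR : R2 < R1) (hR2 : 0 ≤ R2)
    (hC1 : C1 ≤ R1) (hC2 : C2 ≤ R2)
    (hopt : α * (R1 * ((T : ℝ) - t + 1)) + (1 - α) * (C1 + R2 * ((T : ℝ) - t))
        > R2 * ((T : ℝ) - t + 1)) :
    α * (R1 * ((T : ℝ) - t + 2)) + (1 - α) * (C1 + Vrem α R1 R2 C1 (T - t + 1))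
      > R2 + Vrem α R1 R2 C1 (T - t + 1) :=
  stmt_8_general α R1 R2 C1 T t htT hα0 hα1 hR hopt
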